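/- Let X be a set with a large scale structure ℒ (with its induced bounded structure ℬ) and with a topology. Let 𝒞 be the collection of bounded continuous functions X → ℂ that are slowly oscillating. Then every uniformly bounded family 𝒰 ∈ ℒ is uniformly (𝒞,ℬ)-bounded; that is, ℒ ⊆ LS(𝒞,ℬ). -/
import Mathlib


/-- The star `st(A,𝒰)` of a set `A` with respect to a family `𝒰`. -/
def st {X : Type*} (A : Set X) (𝒰 : Set (Set X)) : Set X :=
  A ∪ ⋃ U ∈ {U ∈ 𝒰 | (U ∩ A).Nonempty}, U

/-- The family `st(𝒰,𝒱) = {st(U,𝒱) : U ∈ 𝒰}`. -/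
def stFam {X : Type*} (𝒰 𝒱 : Set (Set X)) : Set (Set X) :=
  (fun U => st U 𝒱) '' 𝒰

/-- `𝒰` refines `𝒱`: every member of `𝒰` is contained in some member of `𝒱`. -/
def Refines {X : Type*} (𝒰 𝒱 : Set (Set X)) : Prop :=
  ∀ U ∈ 𝒰, ∃ V ∈ 𝒱, U ⊆ V

/-- A large scale structure on `X`: a collection of families of subsets
(the uniformly bounded families) containing the family of singletons,
closed under refinement and under stars. -/
structure LargeScaleStructure (X : Type*) where
  fams : Set (Set (Set X))
  singletons_mem : (Set.range fun x : X => ({x} : Set X)) ∈ fams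
  refines_mem : ∀ 𝒰 ∈ fams, ∀ 𝒱 : Set (Set X), Refines 𝒱 𝒰 → 𝒱 ∈ fams
  star_mem : ∀ 𝒰 ∈ fams, ∀ 𝒱 ∈ fams, stFam 𝒰 𝒱 ∈ fams

/-- A set is bounded if it is a singleton or is contained in a member of some
uniformly bounded family. -/
def LSBounded {X : Type*} (ℒ : LargeScaleStructure X) (B : Set X) : Prop :=
  (∃ x : X, B = {x}) ∨ ∃ 𝒰 ∈ ℒ.fams, ∃ U ∈ 𝒰, B ⊆ U

/-- A set is weakly bounded if its intersection with every component of the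
induced bounded structure is bounded. -/
def LSWeaklyBounded {X : Type*} (ℒ : LargeScaleStructure X) (B : Set X) : Prop :=
  ∀ x : X, LSBounded ℒ (B ∩ {y | LSBounded ℒ ({x, y} : Set X)})

/-- `f` is slowly oscillating: for every uniformly bounded family `𝒰` and every
`ε > 0` there is a weakly bounded `B` such that `diam f(U) ≤ ε` for every
`U ∈ 𝒰` meeting `X ∖ B`. -/
def SlowlyOscillating {X Y : Type*} [PseudoMetricSpace Y]
    (ℒ : LargeScaleStructure X) (f : X → Y) : Prop :=
  ∀ 𝒰 ∈ ℒ.fams, ∀ ε : ℝ, 0 < ε → ∃ B : Set X, LSWeaklyBounded ℒ B ∧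
    ∀ U ∈ 𝒰, (U \ B).Nonempty → ∀ x ∈ U, ∀ y ∈ U, dist (f x) (f y) ≤ ε

/-- A family `𝒰` is uniformly `(𝒞,ℬ)`-bounded, where the predicate `WB`
singles out the weakly bounded sets of the bounded structure `ℬ`. -/
def UnifCB {X : Type*} (WB : Set X → Prop) (𝒞 : Set (X → ℂ))
    (𝒰 : Set (Set X)) : Prop :=
  (∀ B : Set X, WB B → WB (st B 𝒰)) ∧
  ∀ B : Set X, WB B → ∀ f ∈ 𝒞, ∀ ε : ℝ, 0 < ε →
    ∃ B' : Set X, WB B' ∧ B ⊆ B' ∧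
      ∀ U ∈ 𝒰, ∀ x ∈ U \ B', ∀ y ∈ U \ B', dist (f x) (f y) ≤ ε

section Helpers

variable {X : Type*} {ℒ : LargeScaleStructure X}

lemma lsbdd_of_subset_mem {𝒱 : Set (Set X)} (h𝒱 : 𝒱 ∈ ℒ.fams) {V B : Set X}
    (hV : V ∈ 𝒱) (h : B ⊆ V) : LSBounded ℒ B :=
  Or.inr ⟨𝒱, h𝒱, V, hV, h⟩

lemma lsbdd_iff {B : Set X} :
    LSBounded ℒ B ↔ ∃ 𝒱 ∈ ℒ.fams, ∃ V ∈ 𝒱, B ⊆ V := by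
  constructor
  · rintro (⟨x, rfl⟩ | h)
    · exact ⟨_, ℒ.singletons_mem, {x}, ⟨x, rfl⟩, subset_rfl⟩
    · exact h
  · exact Or.inr

lemma lsbdd_subset {A B : Set X} (hB : LSBounded ℒ B) (hAB : A ⊆ B) :
    LSBounded ℒ A := by
  obtain ⟨𝒱, h𝒱, V, hV, hBV⟩ := lsbdd_iff.mp hB
  exact lsbdd_of_subset_mem h𝒱 hV (hAB.trans hBV)

lemma subset_st (A : Set X) (𝒰 : Set (Set X)) : A ⊆ st A 𝒰 :=
  Set.subset_union_left

lemma mem_st_of_mem {A U : Set X} {𝒰 : Set (Set X)} (hU : U ∈ 𝒰)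
    (hne : (U ∩ A).Nonempty) : U ⊆ st A 𝒰 := fun y hy =>
  Set.subset_union_right (Set.mem_biUnion ⟨hU, hne⟩ hy)

lemma st_mono {A B : Set X} (𝒰 : Set (Set X)) (h : A ⊆ B) : st A 𝒰 ⊆ st B 𝒰 := by
  rintro y (hy | hy)
  · exact Or.inl (h hy)
  · simp only [Set.mem_iUnion] at hy
    obtain ⟨U, ⟨hU, z, hzU, hzA⟩, hyU⟩ := hy
    exact mem_st_of_mem hU ⟨z, hzU, h hzA⟩ hyU

lemma lsbdd_union {A C : Set X} (hA : LSBounded ℒ A) (hC : LSBounded ℒ C)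
    (hne : (A ∩ C).Nonempty) : LSBounded ℒ (A ∪ C) := by
  obtain ⟨𝒱, h𝒱, V, hV, hAV⟩ := lsbdd_iff.mp hA
  obtain ⟨𝒲, h𝒲, W, hW, hCW⟩ := lsbdd_iff.mp hC
  refine lsbdd_of_subset_mem (ℒ.star_mem 𝒲 h𝒲 𝒱 h𝒱) ⟨W, hW, rfl⟩ ?_
  rintro y (hy | hy)
  · obtain ⟨z, hzA, hzC⟩ := hne
    exact mem_st_of_mem hV ⟨z, hAV hzA, hCW hzC⟩ (hAV hy)
  · exact subset_st _ _ (hCW hy)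

lemma lsbdd_st {B : Set X} {𝒰 : Set (Set X)} (h𝒰 : 𝒰 ∈ ℒ.fams)
    (hB : LSBounded ℒ B) : LSBounded ℒ (st B 𝒰) := by
  obtain ⟨𝒱, h𝒱, V, hV, hBV⟩ := lsbdd_iff.mp hB
  exact lsbdd_of_subset_mem (ℒ.star_mem 𝒱 h𝒱 𝒰 h𝒰) ⟨V, hV, rfl⟩ (st_mono 𝒰 hBV)

/-- Transitivity of the component relation. -/
lemma lsbdd_pair_trans {x y b : X} (h1 : LSBounded ℒ ({x, y} : Set X))
    (h2 : LSBounded ℒ ({y, b} : Set X)) : LSBounded ℒ ({x, b} : Set X) := by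
  have h := lsbdd_union h1 h2 ⟨y, by simp, by simp⟩
  refine lsbdd_subset h ?_
  rintro z (rfl | rfl)
  · exact Or.inl (by simp)
  · exact Or.inr (by simp)

lemma lsbdd_insert {A : Set X} {x a : X} (hA : LSBounded ℒ A) (ha : a ∈ A)
    (hxa : LSBounded ℒ ({x, a} : Set X)) : LSBounded ℒ (insert x A) := by
  have h := lsbdd_union hxa hA ⟨a, by simp, ha⟩
  refine lsbdd_subset h ?_
  rintro z (rfl | hz)
  · exact Or.inl (by simp)
  · exact Or.inr hz
end Helpers

/-- for a hybrid large scale space `X` and `𝒞` the bounded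
continuous slowly oscillating functions, every uniformly bounded family of `ℒ`
is uniformly `(𝒞,ℬ)`-bounded, i.e. `ℒ ⊆ LS(𝒞,ℬ)`. -/
theorem stmt_11 {X : Type*} [TopologicalSpace X] (ℒ : LargeScaleStructure X)
    (𝒰 : Set (Set X)) (h𝒰 : 𝒰 ∈ ℒ.fams) :
    UnifCB (LSWeaklyBounded ℒ)
      {f : X → ℂ | Continuous f ∧ (∃ M : ℝ, ∀ x, ‖f x‖ ≤ M) ∧
        SlowlyOscillating ℒ f} 𝒰 := by
  constructor
  · -- star of weakly bounded is weakly bounded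
    intro B hB x
    set C : Set X := {y | LSBounded ℒ ({x, y} : Set X)} with hC
    have key : st B 𝒰 ∩ C ⊆ st (B ∩ C) 𝒰 := by
      rintro y ⟨(hyB | hyU), hyC⟩
      · exact subset_st _ _ ⟨hyB, hyC⟩
      · simp only [Set.mem_iUnion] at hyU
        obtain ⟨U, ⟨hU, b, hbU, hbB⟩, hyU⟩ := hyU
        have hUbdd : LSBounded ℒ U := lsbdd_of_subset_mem h𝒰 hU subset_rfl
        have hyb : LSBounded ℒ ({y, b} : Set X) :=
          lsbdd_subset hUbdd (by rintro z (rfl | rfl) <;> assumption)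
        have hbC : b ∈ C := lsbdd_pair_trans hyC hyb
        have hne : (U ∩ (B ∩ C)).Nonempty := ⟨b, hbU, hbB, hbC⟩
        exact mem_st_of_mem hU hne hyU
    exact lsbdd_subset (lsbdd_st h𝒰 (hB x)) key
  · -- second clause
    rintro B hB f ⟨-, -, hso⟩ ε hε
    obtain ⟨B₀, hB₀wb, hB₀⟩ := hso 𝒰 h𝒰 ε hε
    refine ⟨B ∪ B₀, ?_, Set.subset_union_left, ?_⟩
    · intro x
      set C : Set X := {y | LSBounded ℒ ({x, y} : Set X)} with hC
      have hsplit : (B ∪ B₀) ∩ C ⊆ (B ∩ C) ∪ (B₀ ∩ C) := by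
        rintro y ⟨(h | h), hyC⟩
        · exact Or.inl ⟨h, hyC⟩
        · exact Or.inr ⟨h, hyC⟩
      rcases Set.eq_empty_or_nonempty (B ∩ C) with hE | ⟨a, haB, haC⟩
      · refine lsbdd_subset (hB₀wb x) ?_
        intro y hy
        rcases hsplit hy with h | h
        · exact absurd (hE ▸ h) (Set.notMem_empty y)
        · exact h
      · rcases Set.eq_empty_or_nonempty (B₀ ∩ C) with hE | ⟨a₀, ha₀B, ha₀C⟩
        · refine lsbdd_subset (hB x) ?_
          intro y hy
          rcases hsplit hy with h | h
          · exact h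
          · exact absurd (hE ▸ h) (Set.notMem_empty y)
        · have h1 : LSBounded ℒ (insert x (B ∩ C)) :=
            lsbdd_insert (hB x) ⟨haB, haC⟩ haC
          have h2 : LSBounded ℒ (insert x (B₀ ∩ C)) :=
            lsbdd_insert (hB₀wb x) ⟨ha₀B, ha₀C⟩ ha₀C
          have h3 := lsbdd_union h1 h2 ⟨x, by simp, by simp⟩
          refine lsbdd_subset h3 ?_
          intro y hy
          rcases hsplit hy with h | h
          · exact Or.inl (Or.inr h)
          · exact Or.inr (Or.inr h)
    · intro U hU y hy z hz
      have hne : (U \ B₀).Nonempty := ⟨y, hy.1, fun h => hy.2 (Or.inr h)⟩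
      exact hB₀ U hU hne y hy.1 z hz.1
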